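/- There exist ℓ > 0, a normalized profile function γ of length ℓ, a point t* ∈ (0,ℓ) with γ''(t*) > 0 (so the Gaussian curvature of S²_γ is negative somewhere and the surface is not convex), and a constant c < 2 such that |Γ(t) + γ'(t)| ≤ c·γ(t) for all t ∈ (0,ℓ); equivalently, m_γ := sup_{t∈(0,ℓ)} |Γ(t)+γ'(t)|/γ(t) < 2. (Consequently positive magnetic curvature is not necessary for all energy levels of (S²_γ, g_γ, μ_γ) to be of contact type.) -/

import Mathlib

/-- A profile function of length `ℓ`: a `C^∞` function `γ` with `γ(0) = γ(ℓ) = 0`,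
`γ > 0` on `(0,ℓ)`, `γ'(0) = 1`, `γ'(ℓ) = -1`, `|γ'| < 1` on `(0,ℓ)`, and all
even-order derivatives of `γ` vanishing at `t = 0` and `t = ℓ`. -/
structure IsProfileFunction (ℓ : ℝ) (γ : ℝ → ℝ) : Prop where
  ell_pos : 0 < ℓ
  smooth : ContDiff ℝ (⊤ : ℕ∞) γ
  zero_left : γ 0 = 0
  zero_right : γ ℓ = 0
  pos : ∀ t ∈ Set.Ioo 0 ℓ, 0 < γ t
  deriv_left : deriv γ 0 = 1
  deriv_right : deriv γ ℓ = -1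
  abs_deriv_lt_one : ∀ t ∈ Set.Ioo 0 ℓ, |deriv γ t| < 1
  even_deriv_left : ∀ n : ℕ, iteratedDeriv (2 * n) γ 0 = 0
  even_deriv_right : ∀ n : ℕ, iteratedDeriv (2 * n) γ ℓ = 0

/-- The profile function is normalized: `∫₀^ℓ γ(t) dt = 2`, so the associated surface
of revolution has area `4π`. -/
def IsNormalizedProfile (ℓ : ℝ) (γ : ℝ → ℝ) : Prop :=
  (∫ t in (0:ℝ)..ℓ, γ t) = 2

/-- `Γ(t) = -1 + ∫₀^t γ(s) ds`. -/
noncomputable def Gam (γ : ℝ → ℝ) (t : ℝ) : ℝ :=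
  -1 + ∫ s in (0:ℝ)..t, γ s

/-!
Perturb the round profile `sin` on `[0, π]` to `γ = sin + u' / 2800` with
`u t = sin² t · sin² (10 t)`. For `sin` itself `Γ + γ' = -cos + cos` vanishes, so
`Γ + γ' = (u + u'') / 2800`. Because `u` vanishes to second order wherever `sin` does,
`|u'| ≤ 22 |sin|` and `|u''| ≤ 1200 sin²`; hence the profile conditions survive and
`|Γ + γ'| ≤ γ / 2`. The fast oscillation of `sin (10 t)` makes `u'''` large, and
`γ'' = -sin + u''' / 2800` is positive at `t = 2π/3`.
-/

open Real

theorem iteratedDeriv_two_mul_eq_zero_of_odd_about {𝕜 F : Type*} [NontriviallyNormedField 𝕜]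
    [CharZero 𝕜] [NormedAddCommGroup F] [NormedSpace 𝕜 F] {f : 𝕜 → F} {a : 𝕜}
    (hf : ∀ s, f (a + s) = -f (a - s)) (n : ℕ) : iteratedDeriv (2 * n) f a = 0 := by
  have h := congrFun (congrArg (iteratedDeriv (2 * n)) (funext hf)) 0
  simp only [iteratedDeriv_comp_const_add, iteratedDeriv_fun_neg, iteratedDeriv_comp_const_sub,
    pow_mul, neg_one_sq, one_pow, one_smul, add_zero, sub_zero] at h
  have h2 : (2 : 𝕜) • iteratedDeriv (2 * n) f a = 0 := by
    rw [two_smul]; nth_rewrite 2 [h]; exact add_neg_cancel _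
  exact (smul_eq_zero.mp h2).resolve_left two_ne_zero

theorem Function.Odd.apply_add_eq_neg_apply_sub {α β : Type*} [Ring α] [Neg β] {f : α → β}
    {a : α} (hf : f.Odd) (hp : f.Periodic (2 * a)) (s : α) : f (a + s) = -f (a - s) := by
  rw [← hf, neg_sub, ← hp (s - a)]
  congr 1
  noncomm_ring

theorem Real.abs_sin_nat_mul_le (n : ℕ) (x : ℝ) : |sin (n * x)| ≤ n * |sin x| := by
  induction n with
  | zero => simp
  | succ n ih =>
    rw [Nat.cast_succ, add_one_mul, sin_add]
    calc |sin (n * x) * cos x + cos (n * x) * sin x|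
        ≤ |sin (n * x)| * |cos x| + |cos (n * x)| * |sin x| := by
          simpa only [abs_mul] using abs_add_le (sin (n * x) * cos x) (cos (n * x) * sin x)
      _ ≤ n * |sin x| * 1 + 1 * |sin x| := by
          gcongr
          · exact abs_cos_le_one x
          · exact abs_cos_le_one _
      _ = (n + 1) * |sin x| := by ring

noncomputable def bump (t : ℝ) : ℝ := sin t ^ 2 * sin (10 * t) ^ 2

noncomputable def bump' (t : ℝ) : ℝ :=
  2 * sin t * cos t * sin (10 * t) ^ 2 + 20 * sin t ^ 2 * sin (10 * t) * cos (10 * t)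

noncomputable def bump'' (t : ℝ) : ℝ :=
  2 * (cos t ^ 2 - sin t ^ 2) * sin (10 * t) ^ 2
    + 80 * sin t * cos t * sin (10 * t) * cos (10 * t)
    + 200 * sin t ^ 2 * (cos (10 * t) ^ 2 - sin (10 * t) ^ 2)

noncomputable def bump''' (t : ℝ) : ℝ :=
  -8 * sin t * cos t * sin (10 * t) ^ 2
    + 120 * (cos t ^ 2 - sin t ^ 2) * sin (10 * t) * cos (10 * t)
    + 1200 * sin t * cos t * (cos (10 * t) ^ 2 - sin (10 * t) ^ 2)
    - 8000 * sin t ^ 2 * sin (10 * t) * cos (10 * t)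

section
variable (t : ℝ)

lemma hasDerivAt_sin_const_mul (k : ℝ) :
    HasDerivAt (fun x => sin (k * x)) (k * cos (k * t)) t := by
  simpa [mul_comm] using ((hasDerivAt_id t).const_mul k).sin

lemma hasDerivAt_cos_const_mul (k : ℝ) :
    HasDerivAt (fun x => cos (k * x)) (-(k * sin (k * t))) t := by
  simpa [mul_comm] using ((hasDerivAt_id t).const_mul k).cos

lemma hasDerivAt_bump : HasDerivAt bump (bump' t) t := by
  have := ((hasDerivAt_sin t).pow 2).mul ((hasDerivAt_sin_const_mul t 10).pow 2)
  exact this.congr_deriv (by simp only [bump', Pi.pow_apply]; push_cast; ring)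

lemma hasDerivAt_bump' : HasDerivAt bump' (bump'' t) t := by
  have hs := hasDerivAt_sin t
  have hc := hasDerivAt_cos t
  have hS := hasDerivAt_sin_const_mul t 10
  have hC := hasDerivAt_cos_const_mul t 10
  have := (((hs.const_mul 2).mul hc).mul (hS.pow 2)).add
    ((((hs.pow 2).const_mul 20).mul hS).mul hC)
  exact this.congr_deriv (by simp only [bump'', Pi.pow_apply, Pi.mul_apply]; push_cast; ring)

lemma hasDerivAt_bump'' : HasDerivAt bump'' (bump''' t) t := by
  have hs := hasDerivAt_sin t
  have hc := hasDerivAt_cos t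
  have hS := hasDerivAt_sin_const_mul t 10
  have hC := hasDerivAt_cos_const_mul t 10
  have := (((((hc.pow 2).sub (hs.pow 2)).const_mul 2).mul (hS.pow 2)).add
      ((((hs.const_mul 80).mul hc).mul hS).mul hC)).add
      (((hs.pow 2).const_mul 200).mul ((hC.pow 2).sub (hS.pow 2)))
  exact this.congr_deriv (by
    simp only [bump''', Pi.pow_apply, Pi.mul_apply, Pi.sub_apply]; push_cast; ring)

lemma abs_bump_le : |bump t| ≤ sin t ^ 2 := by
  rw [bump, abs_of_nonneg (by positivity)]
  nlinarith [sin_sq_le_one (10 * t), sq_nonneg (sin t)]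

lemma abs_bump'_le : |bump' t| ≤ 22 * |sin t| := by
  calc |bump' t|
      ≤ |2 * sin t * cos t * sin (10 * t) ^ 2| + |20 * sin t ^ 2 * sin (10 * t) * cos (10 * t)| :=
        abs_add_le _ _
    _ = 2 * |sin t| * |cos t| * sin (10 * t) ^ 2
        + 20 * sin t ^ 2 * |sin (10 * t)| * |cos (10 * t)| := by
        simp only [abs_mul, abs_pow, sq_abs, abs_two, abs_of_pos (by norm_num : (0:ℝ) < 20)]
    _ ≤ 2 * |sin t| * 1 * 1 + 20 * sin t ^ 2 * 1 * 1 := by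
        gcongr
        exacts [abs_cos_le_one t, sin_sq_le_one _, abs_sin_le_one _, abs_cos_le_one _]
    _ ≤ 22 * |sin t| := by nlinarith [abs_sin_le_one t, abs_nonneg (sin t), sq_abs (sin t)]

lemma abs_bump''_le : |bump'' t| ≤ 1200 * sin t ^ 2 := by
  have hS : |sin (10 * t)| ≤ 10 * |sin t| := by exact_mod_cast abs_sin_nat_mul_le 10 t
  have hS2 : sin (10 * t) ^ 2 ≤ 100 * sin t ^ 2 := by
    nlinarith [sq_abs (sin (10 * t)), sq_abs (sin t), abs_nonneg (sin (10 * t))]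
  have hcs : |cos t ^ 2 - sin t ^ 2| ≤ 1 := by rw [← cos_two_mul']; exact abs_cos_le_one _
  have hCS : |cos (10 * t) ^ 2 - sin (10 * t) ^ 2| ≤ 1 := by
    rw [← cos_two_mul']; exact abs_cos_le_one _
  calc |bump'' t|
      ≤ |2 * (cos t ^ 2 - sin t ^ 2) * sin (10 * t) ^ 2|
        + |80 * sin t * cos t * sin (10 * t) * cos (10 * t)|
        + |200 * sin t ^ 2 * (cos (10 * t) ^ 2 - sin (10 * t) ^ 2)| := abs_add_three _ _ _
    _ = 2 * |cos t ^ 2 - sin t ^ 2| * sin (10 * t) ^ 2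
        + 80 * |sin t| * |cos t| * |sin (10 * t)| * |cos (10 * t)|
        + 200 * sin t ^ 2 * |cos (10 * t) ^ 2 - sin (10 * t) ^ 2| := by
        simp only [abs_mul, abs_pow, sq_abs, abs_two, abs_of_pos (by norm_num : (0:ℝ) < 80),
          abs_of_pos (by norm_num : (0:ℝ) < 200)]
    _ ≤ 2 * 1 * (100 * sin t ^ 2) + 80 * |sin t| * 1 * (10 * |sin t|) * 1
        + 200 * sin t ^ 2 * 1 := by
        gcongr
        exacts [abs_cos_le_one t, abs_cos_le_one _]
    _ = 1200 * sin t ^ 2 := by rw [← sq_abs (sin t)]; ring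

end

noncomputable def profile (t : ℝ) : ℝ := sin t + bump' t / 2800

lemma contDiff_profile : ContDiff ℝ (⊤ : ℕ∞) profile := by
  unfold profile bump'
  fun_prop

lemma hasDerivAt_profile (t : ℝ) : HasDerivAt profile (cos t + bump'' t / 2800) t :=
  (hasDerivAt_sin t).add ((hasDerivAt_bump' t).div_const 2800)

lemma deriv_profile : deriv profile = fun t => cos t + bump'' t / 2800 :=
  funext fun t => (hasDerivAt_profile t).deriv

lemma deriv_deriv_profile (t : ℝ) : deriv (deriv profile) t = -sin t + bump''' t / 2800 := by
  rw [deriv_profile]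
  exact ((hasDerivAt_cos t).add ((hasDerivAt_bump'' t).div_const 2800)).deriv

lemma integral_profile (t : ℝ) : ∫ s in (0 : ℝ)..t, profile s = 1 - cos t + bump t / 2800 := by
  have hF : ∀ s, HasDerivAt (fun s => -cos s + bump s / 2800) (profile s) s := fun s =>
    ((hasDerivAt_cos s).neg.add ((hasDerivAt_bump s).div_const 2800)).congr_deriv (by
      rw [neg_neg, profile])
  rw [intervalIntegral.integral_eq_sub_of_hasDerivAt (fun s _ => hF s)
    (contDiff_profile.continuous.intervalIntegrable 0 t)]
  simp only [bump, cos_zero, sin_zero, mul_zero]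
  ring

lemma Gam_profile (t : ℝ) : Gam profile t = -cos t + bump t / 2800 := by
  rw [Gam, integral_profile]
  ring

lemma profile_odd : profile.Odd := fun t => by
  simp only [profile, bump', mul_neg, sin_neg, cos_neg]
  ring

lemma profile_periodic : profile.Periodic (2 * π) := fun t => by
  have h : 10 * (t + 2 * π) = 10 * t + (10 : ℕ) * (2 * π) := by push_cast; ring
  simp only [profile, bump', h, sin_add_two_pi, cos_add_two_pi, sin_add_nat_mul_two_pi,
    cos_add_nat_mul_two_pi]

lemma mul_sin_le_profile {t : ℝ} (ht : 0 ≤ sin t) : 2778 / 2800 * sin t ≤ profile t := by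
  have hlow := neg_abs_le (bump' t)
  have hbound := abs_bump'_le t
  rw [abs_of_nonneg ht] at hbound
  rw [profile]
  linarith

lemma abs_deriv_profile_lt_one {t : ℝ} (ht : 0 < sin t) : |deriv profile t| < 1 := by
  have hc : cos t ^ 2 < 1 := by nlinarith [sin_sq_add_cos_sq t]
  have hc1 : |cos t| < 1 := (sq_lt_one_iff_abs_lt_one _).mp hc
  have hx : |bump'' t / 2800| ≤ 3 / 7 * (1 - cos t ^ 2) := by
    rw [abs_div, abs_of_pos (by norm_num : (0:ℝ) < 2800), ← sin_sq]
    linarith [abs_bump''_le t]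
  rw [deriv_profile, abs_lt]
  rw [abs_lt] at hc1
  rw [abs_le] at hx
  constructor
  · nlinarith [mul_pos (by linarith : 0 < 1 + cos t) (by linarith : 0 < 1 - 3 / 7 * (1 - cos t))]
  · nlinarith [mul_pos (by linarith : 0 < 1 - cos t) (by linarith : 0 < 1 - 3 / 7 * (1 + cos t))]

lemma abs_Gam_add_deriv_profile_le {t : ℝ} (ht : 0 ≤ sin t) :
    |Gam profile t + deriv profile t| ≤ 1 / 2 * profile t := by
  have h : Gam profile t + deriv profile t = (bump t + bump'' t) / 2800 := by
    rw [Gam_profile, deriv_profile]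
    ring
  have hs2 : sin t ^ 2 ≤ sin t := by nlinarith [sin_le_one t]
  rw [h, abs_div, abs_of_pos (by norm_num : (0:ℝ) < 2800)]
  linarith [abs_add_le (bump t) (bump'' t), abs_bump_le t, abs_bump''_le t, mul_sin_le_profile ht]

lemma isProfileFunction_profile : IsProfileFunction π profile where
  ell_pos := pi_pos
  smooth := contDiff_profile
  zero_left := by simp [profile, bump']
  zero_right := by simp [profile, bump']
  pos t ht := lt_of_lt_of_le (by have := sin_pos_of_pos_of_lt_pi ht.1 ht.2; positivity)
    (mul_sin_le_profile (sin_nonneg_of_nonneg_of_le_pi ht.1.le ht.2.le))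
  deriv_left := by simp [deriv_profile, bump'']
  deriv_right := by
    have : sin (10 * π) = 0 := by exact_mod_cast sin_nat_mul_pi 10
    simp [deriv_profile, bump'', this]
  abs_deriv_lt_one t ht := abs_deriv_profile_lt_one (sin_pos_of_pos_of_lt_pi ht.1 ht.2)
  even_deriv_left := iteratedDeriv_two_mul_eq_zero_of_odd_about fun s => by
    rw [zero_add, zero_sub, profile_odd, neg_neg]
  even_deriv_right := iteratedDeriv_two_mul_eq_zero_of_odd_about
    (profile_odd.apply_add_eq_neg_apply_sub profile_periodic)

lemma isNormalizedProfile_profile : IsNormalizedProfile π profile := by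
  rw [IsNormalizedProfile, integral_profile]
  norm_num [bump]

lemma deriv_deriv_profile_two_pi_div_three_pos : 0 < deriv (deriv profile) (2 * π / 3) := by
  have h : 10 * (2 * π / 3) = 2 * π / 3 + (3 : ℕ) * (2 * π) := by push_cast; ring
  have hs : sin (2 * π / 3) = √3 / 2 := by
    rw [show 2 * π / 3 = π - π / 3 by ring, sin_pi_sub, sin_pi_div_three]
  have hc : cos (2 * π / 3) = -(1 / 2) := by
    rw [show 2 * π / 3 = π - π / 3 by ring, cos_pi_sub, cos_pi_div_three]
  rw [deriv_deriv_profile, bump''', h, sin_add_nat_mul_two_pi, cos_add_nat_mul_two_pi, hs, hc]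
  nlinarith [sq_sqrt (show (0 : ℝ) ≤ 3 by norm_num), sqrt_pos.mpr (show (0 : ℝ) < 3 by norm_num)]

/-- There is a normalized profile function `γ` whose associated surface
is not convex (i.e. `γ'' t* > 0` for some `t* ∈ (0,ℓ)`, so the Gaussian curvature is
negative somewhere) and yet `|Γ t + γ' t| ≤ c γ t` on `(0,ℓ)` for some constant
`c < 2`, i.e. `m_γ < 2`. -/
theorem stmt_10 :
    ∃ ℓ : ℝ, ∃ γ : ℝ → ℝ, 0 < ℓ ∧ IsProfileFunction ℓ γ ∧ IsNormalizedProfile ℓ γ ∧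
      (∃ ts ∈ Set.Ioo 0 ℓ, 0 < deriv (deriv γ) ts) ∧
      ∃ c : ℝ, c < 2 ∧ ∀ t ∈ Set.Ioo 0 ℓ, |Gam γ t + deriv γ t| ≤ c * γ t :=
  ⟨π, profile, pi_pos, isProfileFunction_profile, isNormalizedProfile_profile,
    ⟨2 * π / 3, ⟨by positivity, by linarith [pi_pos]⟩, deriv_deriv_profile_two_pi_div_three_pos⟩,
    1 / 2, by norm_num, fun _ ht =>
      abs_Gam_add_deriv_profile_le (sin_nonneg_of_nonneg_of_le_pi ht.1.le ht.2.le)⟩
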